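/- Let n ∈ ℕ and let V ⊆ ℝ^n be a nonempty compact set. Then int COP(V) ⊆ ⋃_{r ∈ ℕ} C_r^V: every kernel in the interior of COP(V) (with respect to the supremum norm on the space of kernels on V) belongs to C_r^V for some r ∈ ℕ. -/

import Mathlib

noncomputable section

open Filter Topology

/-- The `r`-stack of a `d`-tensor `T`: `Stk^r(T)(u, w) = T(u)`. -/
def stk {α : Type*} (d r : ℕ) (T : (Fin d → α) → ℝ) : (Fin (d + r) → α) → ℝ :=
  fun v => T fun i => v (Fin.castAdd r i)

/-- The symmetrization of a `d`-tensor: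
`σ(T)(v) = (1/d!) ∑_{π ∈ Sym(d)} T(v ∘ π)`. -/
def tsym {α : Type*} (d : ℕ) (T : (Fin d → α) → ℝ) : (Fin d → α) → ℝ :=
  fun v => (d.factorial : ℝ)⁻¹ * ∑ π : Equiv.Perm (Fin d), T (v ∘ π)

/-- A symmetric two-variable function identified with a `2`-tensor. -/
def kerTensor {X : Type*} (K : X → X → ℝ) : (Fin 2 → X) → ℝ :=
  fun v => K (v 0) (v 1)

/-- A kernel: a continuous symmetric real-valued function of two variables. -/
def IsKernel {X : Type*} [TopologicalSpace X] (K : X → X → ℝ) : Prop :=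
  Continuous (fun p : X × X => K p.1 p.2) ∧ ∀ x y, K x y = K y x

/-- Positive semidefiniteness of a two-variable function. -/
def IsPSDKernel {X : Type*} (K : X → X → ℝ) : Prop :=
  ∀ (k : ℕ) (v : Fin k → X) (x : Fin k → ℝ),
    0 ≤ ∑ i, ∑ j, K (v i) (v j) * x i * x j

/-- Copositivity of a two-variable function. -/
def IsCopositiveKernel {X : Type*} (K : X → X → ℝ) : Prop :=
  ∀ (k : ℕ) (v : Fin k → X) (x : Fin k → ℝ), (∀ i, 0 ≤ x i) →
    0 ≤ ∑ i, ∑ j, K (v i) (v j) * x i * x j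

/-- An `(r+2)`-tensor `S` is 2-PSD if it is continuous and every slice
`(x, y) ↦ S(x, y, z)` is a PSD kernel. -/
def Is2PSD {X : Type*} [TopologicalSpace X] (r : ℕ)
    (S : (Fin (2 + r) → X) → ℝ) : Prop :=
  Continuous S ∧ ∀ z : Fin r → X, IsPSDKernel fun x y => S (Fin.append ![x, y] z)

/-- The tensor condition defining `C_r`: `σ(Stk^r M) = σ(N)` for some
nonnegative `(r+2)`-tensor `N`. -/
def CrCond {X : Type*} (r : ℕ) (M : X → X → ℝ) : Prop :=
  ∃ N : (Fin (2 + r) → X) → ℝ, (∀ v, 0 ≤ N v) ∧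
    tsym (2 + r) (stk 2 r (kerTensor M)) = tsym (2 + r) N

/-- Membership in `C_r`: a kernel satisfying the `C_r` tensor condition. -/
def memCr {X : Type*} [TopologicalSpace X] (r : ℕ) (M : X → X → ℝ) : Prop :=
  IsKernel M ∧ CrCond r M

/-- Membership in `Q_r`: a kernel `M` with `σ(Stk^r M) = σ(N) + σ(S)` for some
nonnegative `(r+2)`-tensor `N` and 2-PSD `(r+2)`-tensor `S`. -/
def memQr {X : Type*} [TopologicalSpace X] (r : ℕ) (M : X → X → ℝ) : Prop :=
  IsKernel M ∧ ∃ N S : (Fin (2 + r) → X) → ℝ, (∀ v, 0 ≤ N v) ∧ Is2PSD r S ∧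
    tsym (2 + r) (stk 2 r (kerTensor M)) =
      fun v => tsym (2 + r) N v + tsym (2 + r) S v

/-- The space of kernels on `V`, i.e. symmetric continuous functions on
`V × V`, with the topology of `C(V × V, ℝ)` (for `V` compact this is the
supremum-norm topology). -/
def KernelSpace {n : ℕ} (V : Set (Fin n → ℝ)) : Type _ :=
  {K : C(↥V × ↥V, ℝ) // ∀ x y, K (x, y) = K (y, x)}

instance {n : ℕ} (V : Set (Fin n → ℝ)) : TopologicalSpace (KernelSpace V) :=
  instTopologicalSpaceSubtype

/-- `COP(V)` as a subset of the space of kernels on `V`. -/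
def COPSet {n : ℕ} (V : Set (Fin n → ℝ)) : Set (KernelSpace V) :=
  {K | IsCopositiveKernel fun x y => K.1 (x, y)}


/-! Since `K` is an interior point of `COP(V)`, the shifted kernel `K - δ` is still copositive
for some `δ > 0`; testing it on the all-ones vector gives
`∑_{i,j} K(v_i, v_j) ≥ δ k²` for every `k`-tuple `v`. Since the diagonal of `K` is bounded by
some `C`, the off-diagonal part of this sum is nonnegative as soon as `k ≥ C / δ`. For such `k`,
`σ(Stk^r K)` with `k = r + 2` is a positive multiple of that off-diagonal sum, so
`N := σ(Stk^r K)` itself is a nonnegative witness. -/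

open Finset

lemma tsym_tsym {α : Type*} (d : ℕ) (T : (Fin d → α) → ℝ) :
    tsym d (tsym d T) = tsym d T := by
  funext v
  have hinv : ∀ π : Equiv.Perm (Fin d),
      ∑ σ : Equiv.Perm (Fin d), T ((v ∘ π) ∘ σ) = ∑ σ : Equiv.Perm (Fin d), T (v ∘ σ) :=
    fun π => Equiv.sum_comp (Equiv.mulLeft π) fun σ => T (v ∘ σ)
  have hd : (d.factorial : ℝ) ≠ 0 := Nat.cast_ne_zero.mpr d.factorial_ne_zero
  simp only [tsym, hinv, sum_const, card_univ, Fintype.card_perm, Fintype.card_fin, nsmul_eq_mul]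
  field_simp

lemma Equiv.Perm.exists_apply_eq_and_apply_eq {α : Type*} [DecidableEq α] {a b i j : α}
    (hab : a ≠ b) (hij : i ≠ j) : ∃ τ : Equiv.Perm α, τ a = i ∧ τ b = j := by
  have ha : a ≠ Equiv.swap a i j := by
    intro h
    apply hij
    simpa using congrArg (Equiv.swap a i) h
  refine ⟨Equiv.swap a i * Equiv.swap b (Equiv.swap a i j), ?_, ?_⟩
  · rw [Equiv.Perm.mul_apply, Equiv.swap_apply_of_ne_of_ne hab ha, Equiv.swap_apply_left]
  · rw [Equiv.Perm.mul_apply, Equiv.swap_apply_left, Equiv.swap_apply_self]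

/-- Double counting: every ordered pair of distinct points is hit by `(π a, π b)` equally often. -/
lemma card_offDiag_mul_sum_perm {α : Type*} [Fintype α] [DecidableEq α] (g : α → α → ℝ)
    {a b : α} (hab : a ≠ b) :
    (#(univ : Finset α).offDiag : ℝ) * ∑ π : Equiv.Perm α, g (π a) (π b) =
      (Fintype.card α).factorial * ∑ p ∈ (univ : Finset α).offDiag, g p.1 p.2 := by
  have htrans : ∀ p ∈ (univ : Finset α).offDiag,
      ∑ π : Equiv.Perm α, g (π p.1) (π p.2) = ∑ π : Equiv.Perm α, g (π a) (π b) := by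
    rintro ⟨i, j⟩ hp
    obtain ⟨τ, rfl, rfl⟩ :=
      Equiv.Perm.exists_apply_eq_and_apply_eq hab (mem_offDiag.mp hp).2.2
    exact Equiv.sum_comp (Equiv.mulRight τ) fun π => g (π a) (π b)
  have hreindex : ∀ π : Equiv.Perm α,
      ∑ p ∈ (univ : Finset α).offDiag, g (π p.1) (π p.2) =
        ∑ p ∈ (univ : Finset α).offDiag, g p.1 p.2 :=
    fun π => sum_equiv (π.prodCongr π) (by simp) fun _ _ => rfl
  calc (#(univ : Finset α).offDiag : ℝ) * ∑ π : Equiv.Perm α, g (π a) (π b)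
      = ∑ p ∈ (univ : Finset α).offDiag, ∑ π : Equiv.Perm α, g (π p.1) (π p.2) := by
        rw [sum_congr rfl htrans, sum_const, nsmul_eq_mul]
    _ = ∑ π : Equiv.Perm α, ∑ p ∈ (univ : Finset α).offDiag, g (π p.1) (π p.2) := sum_comm
    _ = (Fintype.card α).factorial * ∑ p ∈ (univ : Finset α).offDiag, g p.1 p.2 := by
        rw [sum_congr rfl fun π _ => hreindex π, sum_const, card_univ, Fintype.card_perm,
          nsmul_eq_mul]

lemma tsym_stk_kerTensor_nonneg {X : Type*} {r : ℕ} {M : X → X → ℝ} {v : Fin (2 + r) → X}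
    (h : 0 ≤ ∑ p ∈ (univ : Finset (Fin (2 + r))).offDiag, M (v p.1) (v p.2)) :
    0 ≤ tsym (2 + r) (stk 2 r (kerTensor M)) v := by
  have hab : Fin.castAdd r (0 : Fin 2) ≠ Fin.castAdd r 1 := by simp [Fin.ext_iff]
  have hcard : (0 : ℝ) < #(univ : Finset (Fin (2 + r))).offDiag :=
    Nat.cast_pos.mpr (card_pos.mpr ⟨(_, _), mem_offDiag.mpr ⟨mem_univ _, mem_univ _, hab⟩⟩)
  have hsum := card_offDiag_mul_sum_perm (fun i j => M (v i) (v j)) hab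
  refine mul_nonneg (by positivity) (nonneg_of_mul_nonneg_right ?_ hcard)
  exact hsum ▸ mul_nonneg (by positivity) h

lemma crCond_of_sum_offDiag_nonneg {X : Type*} {r : ℕ} {M : X → X → ℝ}
    (h : ∀ v : Fin (2 + r) → X,
      0 ≤ ∑ p ∈ (univ : Finset (Fin (2 + r))).offDiag, M (v p.1) (v p.2)) :
    CrCond r M :=
  ⟨_, fun v => tsym_stk_kerTensor_nonneg (h v), (tsym_tsym _ _).symm⟩

lemma mul_sq_le_sum_of_isCopositiveKernel_sub {X : Type*} {M : X → X → ℝ} {δ : ℝ}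
    (hcop : IsCopositiveKernel fun x y => M x y - δ) (k : ℕ) (v : Fin k → X) :
    δ * k ^ 2 ≤ ∑ i, ∑ j, M (v i) (v j) := by
  have h := hcop k v (fun _ => 1) fun _ => zero_le_one
  simp only [mul_one, sum_sub_distrib, sum_const, card_univ, Fintype.card_fin,
    nsmul_eq_mul] at h
  linarith

lemma sum_offDiag_nonneg_of_mul_sq_le_sum {X : Type*} {M : X → X → ℝ} {δ C : ℝ} {k : ℕ}
    {v : Fin k → X} (hsum : δ * k ^ 2 ≤ ∑ i, ∑ j, M (v i) (v j)) (hdiag : ∀ x, M x x ≤ C)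
    (hk : C ≤ δ * k) :
    0 ≤ ∑ p ∈ (univ : Finset (Fin k)).offDiag, M (v p.1) (v p.2) := by
  have hsplit : ∑ i, ∑ j, M (v i) (v j) =
      ∑ i, M (v i) (v i) + ∑ p ∈ (univ : Finset (Fin k)).offDiag, M (v p.1) (v p.2) := by
    rw [← sum_product', ← diag_union_offDiag, sum_union (disjoint_diag_offDiag _), sum_diag]
  have hdiag_sum : ∑ i, M (v i) (v i) ≤ k * C := by
    simpa using sum_le_sum fun i (_ : i ∈ univ) => hdiag (v i)
  nlinarith [mul_le_mul_of_nonneg_left hk (Nat.cast_nonneg (α := ℝ) k)]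

lemma exists_crCond_of_isCopositiveKernel_sub {X : Type*} {M : X → X → ℝ} {δ C : ℝ}
    (hδ : 0 < δ) (hcop : IsCopositiveKernel fun x y => M x y - δ) (hdiag : ∀ x, M x x ≤ C) :
    ∃ r, CrCond r M := by
  refine ⟨⌈C / δ⌉₊, crCond_of_sum_offDiag_nonneg fun v =>
    sum_offDiag_nonneg_of_mul_sq_le_sum (mul_sq_le_sum_of_isCopositiveKernel_sub hcop _ v)
      hdiag ?_⟩
  have := Nat.le_ceil (C / δ)
  rw [div_le_iff₀ hδ] at this
  push_cast
  nlinarith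

namespace KernelSpace

variable {n : ℕ} {V : Set (Fin n → ℝ)}

def subConst (K : KernelSpace V) (c : ℝ) : KernelSpace V :=
  ⟨K.1 - ContinuousMap.const _ c, fun x y => by simp [K.2 x y]⟩

lemma continuous_subConst (K : KernelSpace V) : Continuous K.subConst :=
  (continuous_const.sub ContinuousMap.continuous_const').subtype_mk _

lemma subConst_zero (K : KernelSpace V) : K.subConst 0 = K :=
  Subtype.ext (by ext; simp [subConst])

lemma exists_pos_isCopositiveKernel_sub {K : KernelSpace V} (hK : K ∈ interior (COPSet V)) :
    ∃ δ > 0, IsCopositiveKernel fun x y => K.1 (x, y) - δ := by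
  have hnhds : ∀ᶠ c in 𝓝 (0 : ℝ), K.subConst c ∈ COPSet V := by
    have := K.continuous_subConst.tendsto 0
    rw [subConst_zero] at this
    exact this.eventually (mem_interior_iff_mem_nhds.mp hK)
  obtain ⟨δ, hcop, hδ⟩ := ((hnhds.filter_mono nhdsWithin_le_nhds).and
    (self_mem_nhdsWithin (s := Set.Ioi (0 : ℝ)))).exists
  exact ⟨δ, hδ, hcop⟩

end KernelSpace

theorem stmt6_general (n : ℕ) (V : Set (Fin n → ℝ))
    (hVc : IsCompact V) (K : KernelSpace V)
    (hK : K ∈ interior (COPSet V)) :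
    ∃ r : ℕ, memCr r fun x y : ↥V => K.1 (x, y) := by
  have := isCompact_iff_compactSpace.mp hVc
  obtain ⟨δ, hδ, hcop⟩ := KernelSpace.exists_pos_isCopositiveKernel_sub hK
  obtain ⟨r, hr⟩ := exists_crCond_of_isCopositiveKernel_sub hδ hcop (C := ‖K.1‖)
    fun x => (le_abs_self _).trans (K.1.norm_coe_le_norm (x, x))
  exact ⟨r, ⟨K.1.continuous, K.2⟩, hr⟩

/-- `int COP(V) ⊆ ⋃_r C_r^V`. -/
theorem stmt6 (n : ℕ) (V : Set (Fin n → ℝ)) (hVne : V.Nonempty)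
    (hVc : IsCompact V) (K : KernelSpace V)
    (hK : K ∈ interior (COPSet V)) :
    ∃ r : ℕ, memCr r fun x y : ↥V => K.1 (x, y) :=
  stmt6_general n V hVc K hK
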